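/- arXiv:2501.15851 — 4 statements merged into one kernel-verified Lean document; each statement's English description precedes it below -/
import Mathlib

section
/- Let Q > R ≥ 1 and ℓ ≥ 1 be integers, Σ a finite alphabet with |Σ| = Q, and Σ' ⊆ Σ with |Σ'| = R. Then the number of ℓ-run-length-limited sequences of length 2ℓ over Σ satisfies the exact formula |RLL_{Q,R}(ℓ,2ℓ)| = Q^{2ℓ} − (ℓ+1)·R^ℓ·Q^ℓ + ℓ·R^{ℓ+1}·Q^{ℓ−1}, i.e., |RLL_{Q,R}(ℓ,2ℓ)| = Q^{2ℓ}·(1 − (R/Q)^ℓ·((ℓ+1) − ℓ·(R/Q))). -/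
open Finset Real

/-- A sequence `x ∈ Σⁿ` is `ℓ`-run-length-limited if every window of `ℓ`
consecutive symbols contains at least one symbol outside `S'`. -/
def IsRLL {σ : Type*} (S' : Finset σ) (ℓ : ℕ) {n : ℕ} (x : Fin n → σ) : Prop :=
  ∀ i : ℕ, (h : i + ℓ ≤ n) → ∃ k : ℕ, ∃ hk : k < ℓ, x ⟨i + k, by omega⟩ ∉ S'

section aux

variable {σ : Type*} [Fintype σ] [DecidableEq σ]

/-- Constraint finset for coordinate `j` of the cell indexed by `i`. -/
def Tset (S' : Finset σ) (ℓ i : ℕ) (j : Fin (2*ℓ)) : Finset σ :=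
  if (j:ℕ) + 1 = i then S'ᶜ
  else if i ≤ (j:ℕ) ∧ (j:ℕ) < i + ℓ then S'
  else Finset.univ

/-- The cell of bad sequences whose first all-in-`S'` window starts at `i`. -/
def Cset (S' : Finset σ) (ℓ i : ℕ) : Finset (Fin (2*ℓ) → σ) :=
  Fintype.piFinset (Tset S' ℓ i)

lemma mem_Cset {S' : Finset σ} {ℓ i : ℕ} {x : Fin (2*ℓ) → σ} :
    x ∈ Cset S' ℓ i ↔
      (∀ j : Fin (2*ℓ), i ≤ (j:ℕ) → (j:ℕ) < i + ℓ → x j ∈ S') ∧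
      (∀ j : Fin (2*ℓ), (j:ℕ) + 1 = i → x j ∉ S') := by
  simp only [Cset, Fintype.mem_piFinset, Tset]
  constructor
  · intro h
    constructor
    · intro j h1 h2
      have := h j
      rw [if_neg (by omega), if_pos ⟨h1, h2⟩] at this
      exact this
    · intro j hj
      have := h j
      rw [if_pos hj] at this
      simpa using this
  · rintro ⟨h1, h2⟩ j
    by_cases hj : (j:ℕ) + 1 = i
    · rw [if_pos hj]
      simpa using h2 j hj
    · rw [if_neg hj]
      by_cases hj2 : i ≤ (j:ℕ) ∧ (j:ℕ) < i + ℓ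
      · rw [if_pos hj2]; exact h1 j hj2.1 hj2.2
      · rw [if_neg hj2]; exact Finset.mem_univ _

lemma card_Cset (S' : Finset σ) (ℓ i : ℕ) :
    (Cset S' ℓ i).card = ∏ j ∈ range (2*ℓ),
      (if j + 1 = i then Fintype.card σ - S'.card
       else if i ≤ j ∧ j < i + ℓ then S'.card else Fintype.card σ) := by
  rw [Cset, Fintype.card_piFinset,
    ← Fin.prod_univ_eq_prod_range (fun j =>
      (if j + 1 = i then Fintype.card σ - S'.card
       else if i ≤ j ∧ j < i + ℓ then S'.card else Fintype.card σ))]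
  refine Finset.prod_congr rfl fun j _ => ?_
  unfold Tset
  split_ifs <;> simp [Finset.card_compl, Finset.card_univ]

lemma prod_const_on {f : ℕ → ℕ} {a b c : ℕ} (h : ∀ j, a ≤ j → j < b → f j = c) :
    ∏ j ∈ Finset.Ico a b, f j = c ^ (b - a) := by
  rw [Finset.prod_congr rfl (fun j hj => h j (Finset.mem_Ico.mp hj).1 (Finset.mem_Ico.mp hj).2),
    Finset.prod_const, Nat.card_Ico]

lemma card_Cset_zero (S' : Finset σ) (ℓ : ℕ) :
    (Cset S' ℓ 0).card = S'.card ^ ℓ * Fintype.card σ ^ ℓ := by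
  rw [card_Cset, range_eq_Ico,
    ← Finset.prod_Ico_consecutive _ (Nat.zero_le ℓ) (by omega : ℓ ≤ 2*ℓ)]
  rw [prod_const_on (c := S'.card) (fun j h1 h2 => by
        rw [if_neg (by omega), if_pos (by omega)]),
      prod_const_on (c := Fintype.card σ) (fun j h1 h2 => by
        rw [if_neg (by omega), if_neg (by omega)])]
  congr 1 <;> congr 1 <;> omega

lemma card_Cset_pos (S' : Finset σ) {ℓ i : ℕ} (h1 : 1 ≤ i) (h2 : i ≤ ℓ) :
    (Cset S' ℓ i).card =
      (Fintype.card σ - S'.card) * (S'.card ^ ℓ * Fintype.card σ ^ (ℓ - 1)) := by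
  have hi : i - 1 + 1 = i := by omega
  rw [card_Cset, range_eq_Ico,
    ← Finset.prod_Ico_consecutive _ (by omega : 0 ≤ i - 1) (by omega : i - 1 ≤ 2*ℓ),
    Finset.prod_eq_prod_Ico_succ_bot (by omega : i - 1 < 2*ℓ), hi,
    ← Finset.prod_Ico_consecutive _ (by omega : i ≤ i + ℓ) (by omega : i + ℓ ≤ 2*ℓ)]
  rw [prod_const_on (c := Fintype.card σ) (fun j hj1 hj2 => by
        rw [if_neg (by omega), if_neg (by omega)]),
      prod_const_on (c := S'.card) (fun j hj1 hj2 => by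
        rw [if_neg (by omega), if_pos (by omega)]),
      prod_const_on (c := Fintype.card σ) (fun j hj1 hj2 => by
        rw [if_neg (by omega), if_neg (by omega)]),
      if_pos rfl]
  have hq : Fintype.card σ ^ (i - 1 - 0) * Fintype.card σ ^ (2*ℓ - (i + ℓ)) =
      Fintype.card σ ^ (ℓ - 1) := by
    rw [← pow_add]; congr 1; omega
  calc Fintype.card σ ^ (i - 1 - 0) *
        ((Fintype.card σ - S'.card) * (S'.card ^ (i + ℓ - i) * Fintype.card σ ^ (2*ℓ - (i + ℓ))))
      = (Fintype.card σ - S'.card) * (S'.card ^ (i + ℓ - i) *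
          (Fintype.card σ ^ (i - 1 - 0) * Fintype.card σ ^ (2*ℓ - (i + ℓ)))) := by ring
    _ = (Fintype.card σ - S'.card) * (S'.card ^ ℓ * Fintype.card σ ^ (ℓ - 1)) := by
        rw [hq, Nat.add_sub_cancel_left]

lemma Cset_disjoint (S' : Finset σ) {ℓ i i' : ℕ} (hi : i ≤ ℓ) (hi' : i' ≤ ℓ)
    (hlt : i < i') : Disjoint (Cset S' ℓ i) (Cset S' ℓ i') := by
  rw [Finset.disjoint_left]
  intro x hx hx'
  have hℓ : 1 ≤ ℓ := by omega
  have hmem : x ⟨i' - 1, by omega⟩ ∈ S' :=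
    (mem_Cset.mp hx).1 ⟨i' - 1, by omega⟩ (by show i ≤ i' - 1; omega)
      (by show i' - 1 < i + ℓ; omega)
  exact (mem_Cset.mp hx').2 ⟨i' - 1, by omega⟩ (by show i' - 1 + 1 = i'; omega) hmem

end aux

/-- Exact count of ℓ-RLL sequences of length 2ℓ. -/
theorem rll_card_two_ell {σ : Type*} [Fintype σ] (Q R ℓ : ℕ)
    (hR : 1 ≤ R) (hQR : R < Q) (hℓ : 1 ≤ ℓ)
    (hσ : Fintype.card σ = Q) (S' : Finset σ) (hS' : S'.card = R) :
    (({x : Fin (2 * ℓ) → σ | IsRLL S' ℓ x}.ncard : ℤ)) =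
      (Q : ℤ) ^ (2 * ℓ) - (ℓ + 1) * R ^ ℓ * Q ^ ℓ + ℓ * R ^ (ℓ + 1) * Q ^ (ℓ - 1) := by
  classical
  set bad : Finset (Fin (2*ℓ) → σ) := (range (ℓ+1)).biUnion (Cset S' ℓ) with hbad
  -- the good set is the complement of bad
  have hset : {x : Fin (2 * ℓ) → σ | IsRLL S' ℓ x} = ↑(Finset.univ \ bad) := by
    ext x
    simp only [Set.mem_setOf_eq, Finset.coe_sdiff, Set.mem_diff, Finset.coe_univ,
      Set.mem_univ, true_and, Finset.mem_coe, hbad, Finset.mem_biUnion, Finset.mem_range,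
      not_exists, not_and]
    constructor
    · intro hrll i hi hC
      obtain ⟨k, hk, hnot⟩ := hrll i (by omega)
      exact hnot ((mem_Cset.mp hC).1 ⟨i + k, by omega⟩ (by simp) (by simp; omega))
    · intro h
      by_contra hrll
      -- extract a bad window
      rw [IsRLL] at hrll
      push_neg at hrll
      obtain ⟨i, hile, hall⟩ := hrll
      -- P i : window starting at i is all in S'
      have hP : ∃ i, i ≤ ℓ ∧ ∀ j : Fin (2*ℓ), i ≤ (j:ℕ) → (j:ℕ) < i + ℓ → x j ∈ S' := by
        refine ⟨i, by omega, fun j hj1 hj2 => ?_⟩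
        have := hall ((j:ℕ) - i) (by omega)
        have hje : (⟨i + ((j:ℕ) - i), by omega⟩ : Fin (2*ℓ)) = j := by
          ext; simp; omega
        rwa [hje] at this
      classical
      set i₀ := Nat.find hP with hi₀
      obtain ⟨hi₀le, hi₀P⟩ := Nat.find_spec hP
      refine h i₀ (by omega) (mem_Cset.mpr ⟨hi₀P, ?_⟩)
      intro j hj hmem
      have hlt : i₀ - 1 < i₀ := by omega
      have : ¬ (i₀ - 1 ≤ ℓ ∧ ∀ j : Fin (2*ℓ), i₀ - 1 ≤ (j:ℕ) → (j:ℕ) < i₀ - 1 + ℓ → x j ∈ S') :=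
        Nat.find_min hP hlt
      refine this ⟨by omega, fun j' hj'1 hj'2 => ?_⟩
      by_cases hj' : (j':ℕ) = i₀ - 1
      · have : j' = j := by ext; omega
        rwa [this]
      · exact hi₀P j' (by omega) (by omega)
  rw [hset, Set.ncard_coe_finset]
  have hcard_univ : (Finset.univ : Finset (Fin (2*ℓ) → σ)).card = Q ^ (2*ℓ) := by
    rw [Finset.card_univ, Fintype.card_fun, hσ, Fintype.card_fin]
  have hbadcard : bad.card = R ^ ℓ * Q ^ ℓ + ℓ * ((Q - R) * (R ^ ℓ * Q ^ (ℓ - 1))) := by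
    rw [hbad, Finset.card_biUnion (fun a ha b hb hab => by
      rcases Nat.lt_or_ge a b with h | h
      · exact Cset_disjoint S' (by simpa using Nat.lt_succ_iff.mp (Finset.mem_range.mp ha))
          (by simpa using Nat.lt_succ_iff.mp (Finset.mem_range.mp hb)) h
      · have h' : b < a := by omega
        exact (Cset_disjoint S' (Nat.lt_succ_iff.mp (Finset.mem_range.mp hb))
          (Nat.lt_succ_iff.mp (Finset.mem_range.mp ha)) h').symm)]
    rw [Finset.sum_range_succ']
    have h0 : (Cset S' ℓ 0).card = R ^ ℓ * Q ^ ℓ := by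
      rw [card_Cset_zero, hS', hσ]
    have hpos : ∀ i ∈ range ℓ, (Cset S' ℓ (i+1)).card = (Q - R) * (R ^ ℓ * Q ^ (ℓ - 1)) := by
      intro i hi
      rw [card_Cset_pos S' (by omega) (by simpa using Finset.mem_range.mp hi), hS', hσ]
    rw [Finset.sum_congr rfl hpos, Finset.sum_const, Finset.card_range, smul_eq_mul, h0]
    ring
  have hle : bad.card ≤ Q ^ (2*ℓ) := hcard_univ ▸ Finset.card_le_univ bad
  rw [Finset.card_sdiff_of_subset (Finset.subset_univ bad), hcard_univ, hbadcard]
  have hQℓ : (Q:ℤ) ^ ℓ = Q ^ (ℓ-1) * Q := by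
    rw [← pow_succ]; congr 1; omega
  push_cast [Nat.cast_sub (hbadcard ▸ hle : R ^ ℓ * Q ^ ℓ + ℓ * ((Q - R) * (R ^ ℓ * Q ^ (ℓ - 1))) ≤ Q ^ (2*ℓ)), Nat.cast_sub hQR.le]
  rw [hQℓ]
  ring
end

section
/- Let Q > R ≥ 1, ℓ ≥ 1, and n ≥ 1 be integers, Σ a finite alphabet with |Σ| = Q, and Σ' ⊆ Σ with |Σ'| = R. Then |RLL_{Q,R}(ℓ,n)| ≤ Q^n · (1 − (R/Q)^ℓ · (1 + ℓ·(1 − R/Q)))^{⌊n/(2ℓ)⌋}. -/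
open Finset

/-!
Restriction to consecutive blocks preserves the RLL property, so the number of RLL sequences is
submultiplicative in the length, and in length `n = 2ℓm + r` it is at most `|RLL(2ℓ)|^m · Q^r`.
In length `2ℓ`, for each `i ≤ ℓ` consider the sequences whose window `[i, i + ℓ)` lies in `Σ'`
and, when `i > 0`, whose symbol at `i - 1` lies outside `Σ'`. These `ℓ + 1` cylinders consist of
non-RLL sequences, and they are pairwise disjoint: for `i < j ≤ i + ℓ` the position `j - 1` is
inside the window of `i` but outside `Σ'` for `j`. Their sizes `R^ℓ Q^ℓ` and
`(Q - R) R^ℓ Q^(ℓ-1)` add up to `Q^(2ℓ) (R/Q)^ℓ (1 + ℓ (1 - R/Q))`.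
-/

section RLL

variable {σ : Type*}

noncomputable def rllCount (S' : Finset σ) (ℓ n : ℕ) : ℕ :=
  {x : Fin n → σ | IsRLL S' ℓ x}.ncard

namespace IsRLL

variable {S' : Finset σ} {ℓ a b : ℕ} {x : Fin (a + b) → σ}

theorem comp_castAdd (hx : IsRLL S' ℓ x) : IsRLL S' ℓ (x ∘ Fin.castAdd b) := fun i hi =>
  hx i (by omega)

theorem comp_natAdd (hx : IsRLL S' ℓ x) : IsRLL S' ℓ (x ∘ Fin.natAdd a) := by
  intro i hi
  obtain ⟨k, hk, hxk⟩ := hx (a + i) (by omega)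
  refine ⟨k, hk, ?_⟩
  simpa only [Function.comp_apply, Fin.natAdd_mk, add_assoc] using hxk

end IsRLL

section Count

variable [Fintype σ] (S' : Finset σ) (ℓ : ℕ)

theorem rllCount_le_card_pow (n : ℕ) : rllCount S' ℓ n ≤ Fintype.card σ ^ n := by
  simpa [rllCount] using Set.ncard_le_card {x : Fin n → σ | IsRLL S' ℓ x}

theorem rllCount_add_le (a b : ℕ) : rllCount S' ℓ (a + b) ≤ rllCount S' ℓ a * rllCount S' ℓ b := by
  rw [rllCount, rllCount, rllCount, ← Set.ncard_prod]
  refine Set.ncard_le_ncard_of_injOn (fun x => (x ∘ Fin.castAdd b, x ∘ Fin.natAdd a))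
    (fun x hx => ⟨IsRLL.comp_castAdd hx, IsRLL.comp_natAdd hx⟩) ?_
  intro x _ y _ hxy
  rw [← Fin.append_castAdd_natAdd (f := x), ← Fin.append_castAdd_natAdd (f := y)]
  simp only [Prod.mk.injEq] at hxy
  exact congrArg₂ Fin.append hxy.1 hxy.2

theorem rllCount_mul_add_le (k m r : ℕ) :
    rllCount S' ℓ (k * m + r) ≤ rllCount S' ℓ k ^ m * Fintype.card σ ^ r := by
  induction m with
  | zero => simpa using rllCount_le_card_pow S' ℓ r
  | succ m ih =>
    calc rllCount S' ℓ (k * (m + 1) + r) = rllCount S' ℓ (k + (k * m + r)) := by ring_nf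
      _ ≤ rllCount S' ℓ k * rllCount S' ℓ (k * m + r) := rllCount_add_le S' ℓ _ _
      _ ≤ rllCount S' ℓ k * (rllCount S' ℓ k ^ m * Fintype.card σ ^ r) := by gcongr
      _ = rllCount S' ℓ k ^ (m + 1) * Fintype.card σ ^ r := by ring

end Count

theorem card_piFinset_eq_prod_range (A : ℕ → Finset σ) (n : ℕ) :
    (Fintype.piFinset fun t : Fin n => A t).card = ∏ u ∈ range n, (A u).card := by
  rw [Fintype.card_piFinset, Fin.prod_univ_eq_prod_range (fun u => (A u).card)]

theorem prod_range_eq_pow {f : ℕ → ℕ} {b n : ℕ} (h : ∀ u < n, f u = b) :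
    ∏ u ∈ range n, f u = b ^ n := by
  rw [prod_eq_pow_card fun u hu => h u (mem_range.mp hu), card_range]

section Block

variable [Fintype σ] [DecidableEq σ] (S' : Finset σ) (ℓ : ℕ)

def runPattern (i u : ℕ) : Finset σ :=
  if u + 1 = i then S'ᶜ else if i ≤ u ∧ u < i + ℓ then S' else univ

theorem not_isRLL_of_mem_piFinset_runPattern {n i : ℕ} (hi : i + ℓ ≤ n) {x : Fin n → σ}
    (hx : x ∈ Fintype.piFinset fun t : Fin n => runPattern S' ℓ i t) : ¬ IsRLL S' ℓ x := by
  intro hrll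
  obtain ⟨k, hk, hxk⟩ := hrll i hi
  have hmem : x ⟨i + k, by omega⟩ ∈ runPattern S' ℓ i (i + k) := Fintype.mem_piFinset.mp hx _
  rw [runPattern, if_neg (by omega), if_pos (by omega)] at hmem
  exact hxk hmem

theorem disjoint_piFinset_runPattern {n i j : ℕ} (hij : i < j) (hjℓ : j ≤ i + ℓ) (hjn : j ≤ n) :
    Disjoint (Fintype.piFinset fun t : Fin n => runPattern S' ℓ i t)
      (Fintype.piFinset fun t : Fin n => runPattern S' ℓ j t) := by
  refine Finset.disjoint_left.mpr fun x hxi hxj => ?_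
  have hi : x ⟨j - 1, by omega⟩ ∈ runPattern S' ℓ i (j - 1) := Fintype.mem_piFinset.mp hxi _
  have hj : x ⟨j - 1, by omega⟩ ∈ runPattern S' ℓ j (j - 1) := Fintype.mem_piFinset.mp hxj _
  rw [runPattern, if_neg (by omega), if_pos (by omega)] at hi
  rw [runPattern, if_pos (by omega)] at hj
  exact Finset.mem_compl.mp hj hi

theorem card_piFinset_runPattern_zero {n : ℕ} (hn : ℓ ≤ n) :
    (Fintype.piFinset fun t : Fin n => runPattern S' ℓ 0 t).card
      = #S' ^ ℓ * Fintype.card σ ^ (n - ℓ) := by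
  obtain ⟨c, rfl⟩ := Nat.exists_eq_add_of_le hn
  rw [card_piFinset_eq_prod_range, prod_range_add, Nat.add_sub_cancel_left]
  congr 1
  · exact prod_range_eq_pow fun u hu => by simp [runPattern, hu]
  · exact prod_range_eq_pow fun u _ => by simp [runPattern]

theorem card_piFinset_runPattern_succ {n j : ℕ} (hn : j + 1 + ℓ ≤ n) :
    (Fintype.piFinset fun t : Fin n => runPattern S' ℓ (j + 1) t).card
      = (Fintype.card σ - #S') * #S' ^ ℓ * Fintype.card σ ^ (n - ℓ - 1) := by
  obtain ⟨c, rfl⟩ := Nat.exists_eq_add_of_le hn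
  have hfree : ∀ u, (u < j ∨ j + 1 + ℓ ≤ u) → #(runPattern S' ℓ (j + 1) u) = Fintype.card σ := by
    intro u hu
    rw [runPattern, if_neg (by omega), if_neg (by omega), card_univ]
  have hbefore : ∏ u ∈ range j, #(runPattern S' ℓ (j + 1) u) = Fintype.card σ ^ j :=
    prod_range_eq_pow fun u hu => hfree u (.inl hu)
  have hrun : ∏ u ∈ range ℓ, #(runPattern S' ℓ (j + 1) (j + 1 + u)) = #S' ^ ℓ :=
    prod_range_eq_pow fun u hu => by rw [runPattern, if_neg (by omega), if_pos (by omega)]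
  have hafter : ∏ u ∈ range c, #(runPattern S' ℓ (j + 1) (j + 1 + ℓ + u)) = Fintype.card σ ^ c :=
    prod_range_eq_pow fun u _ => hfree _ (.inr (by omega))
  have hguard : #(runPattern S' ℓ (j + 1) j) = Fintype.card σ - #S' := by
    rw [runPattern, if_pos rfl, card_compl]
  rw [card_piFinset_eq_prod_range, prod_range_add, prod_range_add, prod_range_succ,
    hbefore, hrun, hafter, hguard, show j + 1 + ℓ + c - ℓ - 1 = j + c by omega, pow_add]
  ring

theorem sum_card_piFinset_runPattern (s : ℕ) :
    ∑ i ∈ range (s + 1), (Fintype.piFinset fun t : Fin (ℓ + s) => runPattern S' ℓ i t).card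
      = #S' ^ ℓ * Fintype.card σ ^ s
        + s * ((Fintype.card σ - #S') * #S' ^ ℓ * Fintype.card σ ^ (s - 1)) := by
  rw [sum_range_succ', card_piFinset_runPattern_zero S' ℓ (by omega),
    sum_congr rfl fun j hj => card_piFinset_runPattern_succ S' ℓ (by simp at hj; omega),
    sum_const, card_range, smul_eq_mul, Nat.add_sub_cancel_left, add_comm]

theorem rllCount_add_card_runs_le {s : ℕ} (hs : s ≤ ℓ) :
    rllCount S' ℓ (ℓ + s) + (#S' ^ ℓ * Fintype.card σ ^ s
        + s * ((Fintype.card σ - #S') * #S' ^ ℓ * Fintype.card σ ^ (s - 1)))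
      ≤ Fintype.card σ ^ (ℓ + s) := by
  have hsplit : rllCount S' ℓ (ℓ + s) + {x : Fin (ℓ + s) → σ | ¬ IsRLL S' ℓ x}.ncard
      = Fintype.card σ ^ (ℓ + s) := by
    rw [rllCount, ← Set.compl_ofPred, Set.ncard_add_ncard_compl]
    simp
  have hruns : ((range (s + 1)).biUnion fun i =>
      Fintype.piFinset fun t : Fin (ℓ + s) => runPattern S' ℓ i t).card
        ≤ {x : Fin (ℓ + s) → σ | ¬ IsRLL S' ℓ x}.ncard := by
    rw [← Set.ncard_coe_finset]
    refine Set.ncard_le_ncard (fun x hx => ?_)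
    obtain ⟨i, hi, hx⟩ := mem_biUnion.mp (mem_coe.mp hx)
    exact not_isRLL_of_mem_piFinset_runPattern S' ℓ (by simp at hi; omega) hx
  rw [card_biUnion, sum_card_piFinset_runPattern S' ℓ s] at hruns
  · omega
  · intro i hi j hj hij
    simp only [coe_range, Set.mem_Iio] at hi hj
    rcases hij.lt_or_gt with h | h
    · exact disjoint_piFinset_runPattern S' ℓ h (by omega) (by omega)
    · exact (disjoint_piFinset_runPattern S' ℓ h (by omega) (by omega)).symm

end Block

theorem pow_mul_one_sub_run_density {Q : ℝ} (hQ : Q ≠ 0) (R : ℝ) (k : ℕ) :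
    Q ^ (2 * (k + 1)) * (1 - (R / Q) ^ (k + 1) * (1 + (k + 1) * (1 - R / Q)))
      = Q ^ (2 * (k + 1))
        - (R ^ (k + 1) * Q ^ (k + 1) + (k + 1) * ((Q - R) * R ^ (k + 1) * Q ^ k)) := by
  obtain ⟨x, rfl⟩ : ∃ x, R = x * Q := ⟨R / Q, by field_simp⟩
  rw [mul_div_cancel_right₀ x hQ]
  ring

theorem rllCount_two_mul_le [Fintype σ] [Nonempty σ] (S' : Finset σ) {ℓ : ℕ} (hℓ : 1 ≤ ℓ) :
    (rllCount S' ℓ (2 * ℓ) : ℝ) ≤ (Fintype.card σ : ℝ) ^ (2 * ℓ) *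
      (1 - ((#S' : ℝ) / Fintype.card σ) ^ ℓ * (1 + ℓ * (1 - (#S' : ℝ) / Fintype.card σ))) := by
  classical
  have hcount := Nat.cast_le (α := ℝ) |>.mpr (rllCount_add_card_runs_le S' ℓ le_rfl)
  obtain ⟨k, rfl⟩ := Nat.exists_eq_add_of_le' hℓ
  push_cast [Nat.cast_sub (card_le_univ S'), ← two_mul, Nat.add_sub_cancel] at hcount ⊢
  rw [pow_mul_one_sub_run_density (by positivity)]
  linarith

end RLL

theorem rll_card_upper_bound_general {σ : Type*} [Fintype σ] (Q R ℓ n : ℕ)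
    (hQR : R < Q) (hℓ : 1 ≤ ℓ)
    (hσ : Fintype.card σ = Q) (S' : Finset σ) (hS' : S'.card = R) :
    ({x : Fin n → σ | IsRLL S' ℓ x}.ncard : ℝ) ≤
      (Q : ℝ) ^ n *
        (1 - ((R : ℝ) / Q) ^ ℓ * (1 + (ℓ : ℝ) * (1 - (R : ℝ) / Q))) ^ (n / (2 * ℓ)) := by
  have : Nonempty σ := Fintype.card_pos_iff.mp (by omega)
  set m := n / (2 * ℓ)
  set r := n % (2 * ℓ)
  have hblock := rllCount_two_mul_le S' hℓ
  rw [hσ, hS'] at hblock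
  calc ({x : Fin n → σ | IsRLL S' ℓ x}.ncard : ℝ) = rllCount S' ℓ (2 * ℓ * m + r) := by
        rw [Nat.div_add_mod]; rfl
    _ ≤ (rllCount S' ℓ (2 * ℓ) : ℝ) ^ m * (Q : ℝ) ^ r := by
        exact_mod_cast hσ ▸ rllCount_mul_add_le S' ℓ (2 * ℓ) m r
    _ ≤ ((Q : ℝ) ^ (2 * ℓ) * (1 - ((R : ℝ) / Q) ^ ℓ * (1 + (ℓ : ℝ) * (1 - (R : ℝ) / Q)))) ^ m
          * (Q : ℝ) ^ r := by gcongr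
    _ = (Q : ℝ) ^ n * (1 - ((R : ℝ) / Q) ^ ℓ * (1 + (ℓ : ℝ) * (1 - (R : ℝ) / Q))) ^ m := by
        rw [mul_pow, ← pow_mul, mul_right_comm, ← pow_add, Nat.div_add_mod]

/-- Upper bound on the number of ℓ-RLL sequences of length n. -/
theorem rll_card_upper_bound {σ : Type*} [Fintype σ] (Q R ℓ n : ℕ)
    (hR : 1 ≤ R) (hQR : R < Q) (hℓ : 1 ≤ ℓ) (hn : 1 ≤ n)
    (hσ : Fintype.card σ = Q) (S' : Finset σ) (hS' : S'.card = R) :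
    ({x : Fin n → σ | IsRLL S' ℓ x}.ncard : ℝ) ≤
      (Q : ℝ) ^ n *
        (1 - ((R : ℝ) / Q) ^ ℓ * (1 + (ℓ : ℝ) * (1 - (R : ℝ) / Q))) ^ (n / (2 * ℓ)) :=
  rll_card_upper_bound_general Q R ℓ n hQR hℓ hσ S' hS'
end

section
/- (Union bound for the non-RLL sequences.) Let Q > R ≥ 1, ℓ ≥ 1, and n ≥ ℓ be integers, Σ a finite alphabet with |Σ| = Q, and Σ' ⊆ Σ with |Σ'| = R. Then the number of sequences in Σ^n that are NOT ℓ-run-length-limited satisfies |Σ^n \ RLL_{Q,R}(ℓ,n)| ≤ R^ℓ·Q^{n−ℓ} + (n−ℓ)·(Q−R)·R^ℓ·Q^{n−ℓ−1}; equivalently, |RLL_{Q,R}(ℓ,n)| ≥ Q^n·(1 − (R/Q)^ℓ·(1 + (1 − R/Q)·(n−ℓ))). -/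
open Finset

theorem not_isRLL_iff {σ : Type*} (S' : Finset σ) (ℓ : ℕ) {n : ℕ} (x : Fin n → σ) :
    ¬ IsRLL S' ℓ x ↔ ∃ i, i + ℓ ≤ n ∧ ∀ j : Fin n, i ≤ j → (j : ℕ) < i + ℓ → x j ∈ S' := by
  simp only [IsRLL, not_forall, not_exists, not_not]
  refine exists_congr fun i => ⟨fun ⟨h, hw⟩ => ⟨h, fun j hij hj => ?_⟩,
    fun ⟨h, hw⟩ => ⟨h, fun k hk => hw _ (by simp) (by simp [hk])⟩⟩
  simpa [Nat.add_sub_cancel' hij] using hw (j - i) (by omega)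

namespace IsRLL

variable {σ : Type*} [Fintype σ] [DecidableEq σ] (S' : Finset σ) (ℓ : ℕ) {n : ℕ}

/-- The symbols allowed at position `j` in a sequence with a run of `ℓ` symbols of `S'` starting
at `i` that cannot be extended to the left. -/
def leftMaximalRunPattern (i j : ℕ) : Finset σ :=
  if j + 1 = i then S'ᶜ else if i ≤ j ∧ j < i + ℓ then S' else univ

def leftMaximalRuns (n i : ℕ) : Finset (Fin n → σ) :=
  Fintype.piFinset fun j : Fin n => leftMaximalRunPattern S' ℓ i j

theorem exists_mem_leftMaximalRuns {x : Fin n → σ} (hx : ¬ IsRLL S' ℓ x) :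
    ∃ i, i + ℓ ≤ n ∧ x ∈ leftMaximalRuns S' ℓ n i := by
  rw [not_isRLL_iff] at hx
  obtain ⟨hfit, hrun⟩ := Nat.find_spec hx
  refine ⟨Nat.find hx, hfit, Fintype.mem_piFinset.2 fun j => ?_⟩
  unfold leftMaximalRunPattern
  split_ifs with hprev hwin
  · -- by minimality the window starting at `j` is not a run, and all of it but `x j` lies in
    -- the run starting at `j + 1`
    obtain ⟨j', hj'i, hj', hj'S⟩ : ∃ j' : Fin n, (j : ℕ) ≤ j' ∧ (j' : ℕ) < j + ℓ ∧ x j' ∉ S' := by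
      by_contra! hnone
      exact Nat.find_min hx (show (j : ℕ) < Nat.find hx by omega) ⟨by omega, hnone⟩
    obtain heq | hlt := eq_or_lt_of_le hj'i
    · simpa [Fin.ext heq] using hj'S
    · exact absurd (hrun j' (by omega) (by omega)) hj'S
  · exact hrun j hwin.1 hwin.2
  · exact mem_univ _

theorem card_leftMaximalRunPattern (i j : ℕ) :
    #(leftMaximalRunPattern S' ℓ i j) =
      if j + 1 = i then Fintype.card σ - #S'
      else if i ≤ j ∧ j < i + ℓ then #S' else Fintype.card σ := by
  unfold leftMaximalRunPattern
  split_ifs <;> simp [card_compl]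

theorem card_leftMaximalRuns_eq_prod (i : ℕ) :
    #(leftMaximalRuns S' ℓ n i) = ∏ j ∈ range n, #(leftMaximalRunPattern S' ℓ i j) :=
  (Fintype.card_piFinset _).trans
    (Fin.prod_univ_eq_prod_range (fun j => #(leftMaximalRunPattern S' ℓ i j)) n)

theorem card_leftMaximalRuns_zero (hn : ℓ ≤ n) :
    #(leftMaximalRuns S' ℓ n 0) = #S' ^ ℓ * Fintype.card σ ^ (n - ℓ) := by
  obtain ⟨k, rfl⟩ := Nat.exists_eq_add_of_le hn
  rw [card_leftMaximalRuns_eq_prod, prod_range_add, Nat.add_sub_cancel_left,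
    prod_eq_pow_card (b := #S'), prod_eq_pow_card (b := Fintype.card σ), card_range, card_range]
  · intro j _
    rw [card_leftMaximalRunPattern, if_neg (by omega), if_neg (by omega)]
  · intro j hj
    rw [mem_range] at hj
    rw [card_leftMaximalRunPattern, if_neg (by omega), if_pos (by omega)]

theorem card_leftMaximalRuns_succ {i : ℕ} (hi : i + 1 + ℓ ≤ n) :
    #(leftMaximalRuns S' ℓ n (i + 1)) =
      (Fintype.card σ - #S') * #S' ^ ℓ * Fintype.card σ ^ (n - ℓ - 1) := by
  obtain ⟨m, rfl⟩ := Nat.exists_eq_add_of_le hi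
  rw [card_leftMaximalRuns_eq_prod, prod_range_add, prod_range_add, prod_range_add, prod_range_one,
    prod_eq_pow_card (b := Fintype.card σ), prod_eq_pow_card (b := #S'),
    prod_eq_pow_card (b := Fintype.card σ), card_range, card_range, card_range,
    card_leftMaximalRunPattern, if_pos (by omega), show i + 1 + ℓ + m - ℓ - 1 = i + m by omega,
    pow_add]
  · ring
  · intro j _
    rw [card_leftMaximalRunPattern, if_neg (by omega), if_neg (by omega)]
  · intro j hj
    rw [mem_range] at hj
    rw [card_leftMaximalRunPattern, if_neg (by omega), if_pos (by omega)]
  · intro j hj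
    rw [mem_range] at hj
    rw [card_leftMaximalRunPattern, if_neg (by omega), if_neg (by omega)]

theorem ncard_setOf_not_le (hn : ℓ ≤ n) :
    {x : Fin n → σ | ¬ IsRLL S' ℓ x}.ncard ≤
      #S' ^ ℓ * Fintype.card σ ^ (n - ℓ) +
        (n - ℓ) * (Fintype.card σ - #S') * #S' ^ ℓ * Fintype.card σ ^ (n - ℓ - 1) := by
  calc {x | ¬ IsRLL S' ℓ x}.ncard
      ≤ #((range (n - ℓ + 1)).biUnion (leftMaximalRuns S' ℓ n)) := by
        rw [← Set.ncard_coe_finset]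
        refine Set.ncard_le_ncard (fun x hx => ?_) (Finset.finite_toSet _)
        obtain ⟨i, hi, hxi⟩ := exists_mem_leftMaximalRuns S' ℓ hx
        exact mem_biUnion.2 ⟨i, mem_range.2 (by omega), hxi⟩
    _ ≤ ∑ i ∈ range (n - ℓ + 1), #(leftMaximalRuns S' ℓ n i) := card_biUnion_le
    _ = _ := by
        rw [sum_range_succ', card_leftMaximalRuns_zero S' ℓ hn,
          sum_congr rfl fun i hi => card_leftMaximalRuns_succ S' ℓ (by rw [mem_range] at hi; omega),
          sum_const, card_range, smul_eq_mul]
        ring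

end IsRLL

theorem pow_mul_one_sub_div_pow_mul_eq {Q : ℝ} (hQ : Q ≠ 0) (R : ℝ) {ℓ n : ℕ} (hn : ℓ ≤ n) :
    Q ^ n * (1 - (R / Q) ^ ℓ * (1 + (1 - R / Q) * ((n : ℝ) - ℓ))) =
      Q ^ n - (R ^ ℓ * Q ^ (n - ℓ) + ((n : ℝ) - ℓ) * (Q - R) * R ^ ℓ * Q ^ (n - ℓ - 1)) := by
  obtain ⟨k, rfl⟩ := Nat.exists_eq_add_of_le hn
  simp only [Nat.add_sub_cancel_left, Nat.cast_add, add_sub_cancel_left, div_pow, pow_add]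
  cases k with
  | zero => field_simp; ring
  | succ k => simp only [Nat.add_sub_cancel, pow_succ, Nat.cast_succ]; field_simp

theorem rll_union_bound_general {σ : Type*} [Fintype σ] (Q R ℓ n : ℕ)
    (hQR : R < Q) (hn : ℓ ≤ n)
    (hσ : Fintype.card σ = Q) (S' : Finset σ) (hS' : S'.card = R) :
    {x : Fin n → σ | ¬ IsRLL S' ℓ x}.ncard ≤
        R ^ ℓ * Q ^ (n - ℓ) + (n - ℓ) * (Q - R) * R ^ ℓ * Q ^ (n - ℓ - 1) ∧
      (Q : ℝ) ^ n *
          (1 - ((R : ℝ) / Q) ^ ℓ * (1 + (1 - (R : ℝ) / Q) * ((n : ℝ) - (ℓ : ℝ)))) ≤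
        ({x : Fin n → σ | IsRLL S' ℓ x}.ncard : ℝ) := by
  classical
  have hbad := IsRLL.ncard_setOf_not_le S' ℓ hn
  rw [hσ, hS'] at hbad
  have htotal :
      {x : Fin n → σ | IsRLL S' ℓ x}.ncard + {x : Fin n → σ | ¬ IsRLL S' ℓ x}.ncard = Q ^ n := by
    rw [← Set.compl_ofPred, Set.ncard_add_ncard_compl, Nat.card_fun, Nat.card_eq_fintype_card, hσ,
      Nat.card_fin]
  have hbad_real := (Nat.cast_le (α := ℝ)).2 hbad
  push_cast [Nat.cast_sub hn, Nat.cast_sub hQR.le] at hbad_real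
  refine ⟨hbad, ?_⟩
  rw [pow_mul_one_sub_div_pow_mul_eq (Nat.cast_ne_zero.2 (by omega)) _ hn]
  have htotal_real := congrArg (Nat.cast : ℕ → ℝ) htotal
  push_cast at htotal_real
  linarith

/-- Union bound on the number of non-ℓ-RLL sequences, and the resulting
lower bound on the number of ℓ-RLL sequences. -/
theorem rll_union_bound {σ : Type*} [Fintype σ] (Q R ℓ n : ℕ)
    (hR : 1 ≤ R) (hQR : R < Q) (hℓ : 1 ≤ ℓ) (hn : ℓ ≤ n)
    (hσ : Fintype.card σ = Q) (S' : Finset σ) (hS' : S'.card = R) :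
    {x : Fin n → σ | ¬ IsRLL S' ℓ x}.ncard ≤
        R ^ ℓ * Q ^ (n - ℓ) + (n - ℓ) * (Q - R) * R ^ ℓ * Q ^ (n - ℓ - 1) ∧
      (Q : ℝ) ^ n *
          (1 - ((R : ℝ) / Q) ^ ℓ * (1 + (1 - (R : ℝ) / Q) * ((n : ℝ) - (ℓ : ℝ)))) ≤
        ({x : Fin n → σ | IsRLL S' ℓ x}.ncard : ℝ) :=
  rll_union_bound_general Q R ℓ n hQR hn hσ S' hS'
end

section
/- Let Q > R ≥ 1, ℓ ≥ 1, and n ≥ ℓ be integers, Σ a finite alphabet with |Σ| = Q, and Σ' ⊆ Σ with |Σ'| = R. Set x = (R/Q)^ℓ·(1 + (1 − R/Q)·(n−ℓ)). If x < 1, then the redundancy satisfies red(RLL_{Q,R}(ℓ,n)) ≤ log_Q(e) · x/(1 − x). -/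
/-!
A sequence fails to be `ℓ`-RLL iff some window of `ℓ` consecutive symbols lies in `Σ'`. Classifying
it by the first such window, starting at `i`, puts it in an event that fixes the window to `Σ'` and,
for `i > 0`, the preceding symbol to `Σ \ Σ'`; these events have `R^ℓ Q^(n-ℓ)` and
`R^ℓ (Q-R) Q^(n-ℓ-1)` elements. The union bound over the `n - ℓ + 1` starting points gives at most
`x Qⁿ` bad sequences, so `|RLL| ≥ (1 - x) Qⁿ` and the redundancy is at most
`-log_Q (1 - x) ≤ log_Q e · x / (1 - x)`.
-/

open Finset Real

section Counting

variable {σ : Type*} [Fintype σ]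

theorem card_piFinset_ite_mem [DecidableEq σ] {n : ℕ}
    (s : Finset σ) {A B : Finset ℕ} (hA : A ⊆ range n) (hB : B ⊆ range n)
    (hAB : Disjoint A B) :
    #(Fintype.piFinset fun j : Fin n => if (j : ℕ) ∈ A then s else if (j : ℕ) ∈ B then sᶜ
      else univ) =
      #s ^ #A * (Fintype.card σ - #s) ^ #B * Fintype.card σ ^ (n - #A - #B) := by
  have hA' : {m ∈ range n | m ∈ A} = A := by
    rw [filter_mem_eq_inter, inter_eq_right.mpr hA]
  have hB' : {m ∈ {m ∈ range n | m ∉ A} | m ∈ B} = B := by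
    ext m
    simp only [mem_filter, mem_range]
    exact ⟨fun h => h.2, fun h => ⟨⟨mem_range.mp (hB h), disjoint_right.mp hAB h⟩, h⟩⟩
  have hrest : #{m ∈ {m ∈ range n | m ∉ A} | m ∉ B} = n - #A - #B := by
    have h1 := card_filter_add_card_filter_not (s := range n) (p := (· ∈ A))
    have h2 := card_filter_add_card_filter_not (s := {m ∈ range n | m ∉ A}) (p := (· ∈ B))
    rw [hA', card_range] at h1
    rw [hB'] at h2
    omega
  rw [Fintype.card_piFinset, Fin.prod_univ_eq_prod_range (fun m => #(if m ∈ A then s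
    else if m ∈ B then sᶜ else univ))]
  simp only [apply_ite card, card_compl, card_univ]
  rw [prod_ite, prod_ite]
  simp only [prod_const, hA', hB', hrest, mul_assoc]

/-- For `i = 0` the interval `Ico (i - 1) i` is empty, so only the window is constrained. -/
def firstRunEvent [DecidableEq σ] (S' : Finset σ) (ℓ i n : ℕ) :
    Finset (Fin n → σ) :=
  Fintype.piFinset fun j => if (j : ℕ) ∈ Ico i (i + ℓ) then S'
    else if (j : ℕ) ∈ Ico (i - 1) i then S'ᶜ else univ

theorem card_firstRunEvent [DecidableEq σ] (S' : Finset σ) {ℓ i n : ℕ} (hi : i + ℓ ≤ n) :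
    #(firstRunEvent S' ℓ i n) = #S' ^ ℓ * (Fintype.card σ - #S') ^ (i - (i - 1)) *
      Fintype.card σ ^ (n - ℓ - (i - (i - 1))) := by
  rw [firstRunEvent, card_piFinset_ite_mem S', Nat.card_Ico, Nat.card_Ico, Nat.add_sub_cancel_left]
  · intro m hm; simp only [mem_Ico, mem_range] at hm ⊢; omega
  · intro m hm; simp only [mem_Ico, mem_range] at hm ⊢; omega
  · rw [disjoint_left]; intro m; simp only [mem_Ico]; omega

theorem exists_mem_firstRunEvent_of_not_isRLL [DecidableEq σ] {S' : Finset σ} {ℓ n : ℕ}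
    {x : Fin n → σ} (hx : ¬IsRLL S' ℓ x) :
    ∃ i, i + ℓ ≤ n ∧ x ∈ firstRunEvent S' ℓ i n := by
  classical
  let P : ℕ → Prop := fun i => i + ℓ ≤ n ∧ ∀ j : Fin n, (j : ℕ) ∈ Ico i (i + ℓ) → x j ∈ S'
  have hP : ∃ i, P i := by
    simp only [IsRLL, not_forall, not_exists, not_not] at hx
    obtain ⟨i, hi, hwin⟩ := hx
    refine ⟨i, hi, fun j hj => ?_⟩
    rw [mem_Ico] at hj
    convert hwin (j - i) (by omega) using 2
    exact Fin.ext (by simp only; omega)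
  obtain ⟨hfit, hwin⟩ := Nat.find_spec hP
  refine ⟨Nat.find hP, hfit, Fintype.mem_piFinset.mpr fun j => ?_⟩
  split_ifs with hj hprev
  · exact hwin j hj
  · -- a run of `S'` starting at `j` would contradict the minimality of `Nat.find hP`
    rw [mem_Ico] at hprev
    refine mem_compl.mpr fun hxj => Nat.find_min hP (m := j) (by omega) ⟨by omega, ?_⟩
    intro j' hj'
    by_cases h : (j' : ℕ) = j
    · rwa [Fin.ext h]
    · exact hwin j' (by simp only [mem_Ico] at hj' ⊢; omega)
  · exact mem_univ _

theorem ncard_not_isRLL_le (S' : Finset σ) {ℓ n : ℕ} (hn : ℓ ≤ n) :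
    {x : Fin n → σ | ¬IsRLL S' ℓ x}.ncard ≤ #S' ^ ℓ * Fintype.card σ ^ (n - ℓ) +
      (n - ℓ) * (#S' ^ ℓ * (Fintype.card σ - #S') * Fintype.card σ ^ (n - ℓ - 1)) := by
  classical
  have hcover : {x : Fin n → σ | ¬IsRLL S' ℓ x} ⊆
      ↑((range (n - ℓ + 1)).biUnion fun i => firstRunEvent S' ℓ i n) := by
    intro x hx
    obtain ⟨i, hi, hxi⟩ := exists_mem_firstRunEvent_of_not_isRLL hx
    exact mem_coe.mpr (mem_biUnion.mpr ⟨i, mem_range.mpr (by omega), hxi⟩)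
  calc {x : Fin n → σ | ¬IsRLL S' ℓ x}.ncard
      ≤ #((range (n - ℓ + 1)).biUnion fun i => firstRunEvent S' ℓ i n) := by
        rw [← Set.ncard_coe_finset]; exact Set.ncard_le_ncard hcover
    _ ≤ ∑ i ∈ range (n - ℓ + 1), #(firstRunEvent S' ℓ i n) := card_biUnion_le
    _ = _ := by
        rw [sum_range_succ', sum_congr rfl fun i hi => card_firstRunEvent S'
          (by rw [mem_range] at hi; omega), card_firstRunEvent S' (by omega)]
        simp [mul_assoc, add_comm]

theorem pow_mul_one_sub_le_ncard_isRLL [Nonempty σ] (S' : Finset σ) {ℓ n : ℕ} (hn : ℓ ≤ n) :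
    (Fintype.card σ : ℝ) ^ n * (1 - ((#S' : ℝ) / Fintype.card σ) ^ ℓ *
      (1 + (1 - (#S' : ℝ) / Fintype.card σ) * ((n : ℝ) - ℓ))) ≤
      {x : Fin n → σ | IsRLL S' ℓ x}.ncard := by
  have hQ : (Fintype.card σ : ℝ) ≠ 0 := Nat.cast_ne_zero.mpr Fintype.card_ne_zero
  have htotal : {x : Fin n → σ | IsRLL S' ℓ x}.ncard + {x : Fin n → σ | ¬IsRLL S' ℓ x}.ncard =
      Fintype.card σ ^ n := by
    rw [← Set.compl_ofPred, Set.ncard_add_ncard_compl, Nat.card_eq_fintype_card,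
      Fintype.card_fun, Fintype.card_fin]
  have hbad : ({x : Fin n → σ | ¬IsRLL S' ℓ x}.ncard : ℝ) ≤
      (Fintype.card σ : ℝ) ^ n * (((#S' : ℝ) / Fintype.card σ) ^ ℓ *
        (1 + (1 - (#S' : ℝ) / Fintype.card σ) * ((n : ℝ) - ℓ))) := by
    refine (Nat.cast_le.mpr (ncard_not_isRLL_le S' hn)).trans_eq ?_
    obtain ⟨k, rfl⟩ := Nat.exists_eq_add_of_le hn
    rcases k with _ | k
    · simp only [add_zero, Nat.sub_self, pow_zero, mul_one, zero_mul, sub_self, mul_zero,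
        div_pow, Nat.cast_pow]
      field_simp
    · push_cast [Nat.cast_sub (card_le_univ S'), Nat.add_sub_cancel_left]
      rw [div_pow]
      field_simp
      ring
  have := congrArg (Nat.cast (R := ℝ)) htotal
  push_cast at this
  linarith

end Counting

theorem neg_log_one_sub_le_div {x : ℝ} (hx : x < 1) : -log (1 - x) ≤ x / (1 - x) := by
  have h := one_sub_inv_le_log_of_pos (sub_pos.mpr hx)
  have hdiv : x / (1 - x) = (1 - x)⁻¹ - 1 := by field_simp [(sub_pos.mpr hx).ne']; ring
  linarith

theorem sub_logb_le_of_pow_mul_one_sub_le {b x G : ℝ} {n : ℕ} (hb : 1 < b) (hx : x < 1)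
    (hG : b ^ n * (1 - x) ≤ G) :
    n - logb b G ≤ logb b (exp 1) * (x / (1 - x)) := by
  have hbn : 0 < b ^ n := pow_pos (by linarith) n
  have h1x : 0 < 1 - x := sub_pos.mpr hx
  calc n - logb b G ≤ n - logb b (b ^ n * (1 - x)) :=
        sub_le_sub_left (logb_le_logb_of_le hb (by positivity) hG) _
    _ = -log (1 - x) / log b := by
        rw [logb_mul hbn.ne' h1x.ne', logb_pow, logb_self_eq_one hb, logb]; ring
    _ ≤ x / (1 - x) / log b := by gcongr; exacts [(log_pos hb).le, neg_log_one_sub_le_div hx]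
    _ = logb b (exp 1) * (x / (1 - x)) := by rw [logb, log_exp]; ring

theorem rll_redundancy_union_bound_general {σ : Type*} [Fintype σ] (Q R ℓ n : ℕ)
    (hR : 1 ≤ R) (hQR : R < Q) (hn : ℓ ≤ n)
    (hσ : Fintype.card σ = Q) (S' : Finset σ) (hS' : S'.card = R)
    (hx : ((R : ℝ) / Q) ^ ℓ * (1 + (1 - (R : ℝ) / Q) * ((n : ℝ) - (ℓ : ℝ))) < 1) :
    (n : ℝ) - Real.logb Q ({x : Fin n → σ | IsRLL S' ℓ x}.ncard) ≤
      Real.logb Q (Real.exp 1) *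
        (((R : ℝ) / Q) ^ ℓ * (1 + (1 - (R : ℝ) / Q) * ((n : ℝ) - (ℓ : ℝ))) /
          (1 - ((R : ℝ) / Q) ^ ℓ * (1 + (1 - (R : ℝ) / Q) * ((n : ℝ) - (ℓ : ℝ))))) := by
  have : Nonempty σ := Fintype.card_pos_iff.mp (by omega)
  have hcount := pow_mul_one_sub_le_ncard_isRLL S' hn
  rw [hσ, hS'] at hcount
  exact sub_logb_le_of_pow_mul_one_sub_le (by exact_mod_cast hR.trans_lt hQR) hx hcount

/-- Redundancy upper bound from the union bound. -/
theorem rll_redundancy_union_bound {σ : Type*} [Fintype σ] (Q R ℓ n : ℕ)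
    (hR : 1 ≤ R) (hQR : R < Q) (hℓ : 1 ≤ ℓ) (hn : ℓ ≤ n)
    (hσ : Fintype.card σ = Q) (S' : Finset σ) (hS' : S'.card = R)
    (hx : ((R : ℝ) / Q) ^ ℓ * (1 + (1 - (R : ℝ) / Q) * ((n : ℝ) - (ℓ : ℝ))) < 1) :
    (n : ℝ) - Real.logb Q ({x : Fin n → σ | IsRLL S' ℓ x}.ncard) ≤
      Real.logb Q (Real.exp 1) *
        (((R : ℝ) / Q) ^ ℓ * (1 + (1 - (R : ℝ) / Q) * ((n : ℝ) - (ℓ : ℝ))) /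
          (1 - ((R : ℝ) / Q) ^ ℓ * (1 + (1 - (R : ℝ) / Q) * ((n : ℝ) - (ℓ : ℝ))))) :=
  rll_redundancy_union_bound_general Q R ℓ n hR hQR hn hσ S' hS' hx
end
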